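/- For every m ∈ {2,…,q} and every configuration σ ∈ B̄^2_{ℓ*−1,ℓ*}(m,1) (all spins m except a quasi-square (ℓ*−1)×ℓ* of spins 1 with a bar of length 2 attached to one of its sides of length ℓ*), there exists a path γ from σ to the stable state 𝟏 whose maximum energy satisfies max_{ξ∈γ} H(ξ) < 4ℓ* − h(ℓ*(ℓ*−1)+1) + H(𝐦). -/

import Mathlib

/-!
Metastability for the q-state Potts model with positive external magnetic field
on the K × L torus, under Glauber (single-spin-flip) dynamics.
-/

namespace PottsPos

/-- Vertices of the `K × L` torus (periodic boundary conditions). -/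
abbrev Vtx (K L : ℕ) := ZMod K × ZMod L

/-- Spin configurations; spins are natural numbers
(valid configurations take values in `{1,…,q}`). -/
abbrev Cfg (K L : ℕ) := Vtx K L → ℕ

/-- `σ` is a genuine `q`-state Potts configuration: all spins lie in `{1,…,q}`. -/
def IsConf (q K L : ℕ) (σ : Cfg K L) : Prop := ∀ v, 1 ≤ σ v ∧ σ v ≤ q

/-- The constant configuration with all spins equal to `s`. -/
def const (K L s : ℕ) : Cfg K L := fun _ => s

/-- Nearest-neighbour adjacency on the torus. -/
def Adj (K L : ℕ) (v w : Vtx K L) : Prop :=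
  w = (v.1 + 1, v.2) ∨ w = (v.1 - 1, v.2) ∨ w = (v.1, v.2 + 1) ∨ w = (v.1, v.2 - 1)

/-- The Hamiltonian
`H(σ) = −Σ_{(v,w)∈E} 1{σ(v)=σ(w)} − h·Σ_{v∈Λ} 1{σ(v)=1}`,
where each torus edge is counted once via its "forward" endpoints. -/
noncomputable def energy (K L : ℕ) [NeZero K] [NeZero L] (h : ℝ) (σ : Cfg K L) : ℝ :=
  -(∑ v : Vtx K L, ((if σ v = σ (v.1 + 1, v.2) then (1 : ℝ) else 0)
      + (if σ v = σ (v.1, v.2 + 1) then (1 : ℝ) else 0)))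
    - h * ∑ v : Vtx K L, (if σ v = 1 then (1 : ℝ) else 0)

/-- Two configurations communicate iff they differ at exactly one vertex. -/
def Communicates (K L : ℕ) (σ σ' : Cfg K L) : Prop :=
  ∃ v, σ v ≠ σ' v ∧ ∀ w, w ≠ v → σ w = σ' w

/-- `ω` is a path from `σ` to `σ'` in the space of valid configurations:
a nonempty finite sequence starting at `σ`, ending at `σ'`,
in which consecutive configurations communicate. -/
def IsPath (q K L : ℕ) (σ σ' : Cfg K L) (ω : List (Cfg K L)) : Prop :=
  ω.head? = some σ ∧ ω.getLast? = some σ' ∧ ω.Chain' (Communicates K L) ∧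
    ∀ η ∈ ω, IsConf q K L η

/-- The height of a path: the maximal energy along it. -/
noncomputable def height (K L : ℕ) [NeZero K] [NeZero L] (h : ℝ)
    (ω : List (Cfg K L)) : ℝ :=
  sSup (energy K L h '' {η | η ∈ ω})

/-- The communication height `Φ(σ,σ')`: minimal height over all paths `σ → σ'`. -/
noncomputable def Phi (q K L : ℕ) [NeZero K] [NeZero L] (h : ℝ) (σ σ' : Cfg K L) : ℝ :=
  sInf (height K L h '' {ω | IsPath q K L σ σ' ω})

/-- The communication height `Φ(σ,A) = min_{σ'∈A} Φ(σ,σ')`. -/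
noncomputable def PhiSet (q K L : ℕ) [NeZero K] [NeZero L] (h : ℝ) (σ : Cfg K L)
    (A : Set (Cfg K L)) : ℝ :=
  sInf (Phi q K L h σ '' A)

/-- Optimal paths from `σ` to `σ'`: paths whose height equals `Φ(σ,σ')`. -/
def IsOptPath (q K L : ℕ) [NeZero K] [NeZero L] (h : ℝ) (σ σ' : Cfg K L)
    (ω : List (Cfg K L)) : Prop :=
  IsPath q K L σ σ' ω ∧ height K L h ω = Phi q K L h σ σ'

/-- Optimal paths from `σ` to the set `A`: paths from `σ` to some element of `A`
whose height equals `Φ(σ,A)`. -/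
def IsOptPathSet (q K L : ℕ) [NeZero K] [NeZero L] (h : ℝ) (σ : Cfg K L)
    (A : Set (Cfg K L)) (ω : List (Cfg K L)) : Prop :=
  ∃ σ' ∈ A, IsPath q K L σ σ' ω ∧ height K L h ω = PhiSet q K L h σ A

/-- The stability level `V_σ = Φ(σ, I_σ) − H(σ)`, `I_σ = {η : H(η) < H(σ)}`. -/
noncomputable def stabLevel (q K L : ℕ) [NeZero K] [NeZero L] (h : ℝ)
    (σ : Cfg K L) : ℝ :=
  PhiSet q K L h σ {η | IsConf q K L η ∧ energy K L h η < energy K L h σ}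
    - energy K L h σ

/-- The stable set `X^s`: global minima of the Hamiltonian. -/
def stableSet (q K L : ℕ) [NeZero K] [NeZero L] (h : ℝ) : Set (Cfg K L) :=
  {σ | IsConf q K L σ ∧ ∀ η, IsConf q K L η → energy K L h σ ≤ energy K L h η}

/-- The metastable set `X^m`: non-stable states of maximal stability level. -/
noncomputable def metastableSet (q K L : ℕ) [NeZero K] [NeZero L] (h : ℝ) :
    Set (Cfg K L) :=
  {σ | IsConf q K L σ ∧ σ ∉ stableSet q K L h ∧
    stabLevel q K L h σ =
      sSup {t | ∃ η, IsConf q K L η ∧ η ∉ stableSet q K L h ∧ stabLevel q K L h η = t}}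

/-- The critical length `ℓ* = ⌈2/h⌉`. -/
noncomputable def ellStar (h : ℝ) : ℕ := ⌈(2 : ℝ) / h⌉₊

/-- The energy barrier `Γ = 4ℓ* − h(ℓ*(ℓ*−1)+1)`. -/
noncomputable def Gamma (h : ℝ) : ℝ :=
  4 * (ellStar h : ℝ) - h * ((ellStar h : ℝ) * ((ellStar h : ℝ) - 1) + 1)

/-- `W` is a gate for the transition `σ → A`: every configuration of `W` lies on some
optimal path from `σ` to `A` at energy `Φ(σ,A)`, and every optimal path from `σ`
to `A` visits `W`. -/
def IsGate (q K L : ℕ) [NeZero K] [NeZero L] (h : ℝ) (σ : Cfg K L)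
    (A W : Set (Cfg K L)) : Prop :=
  (∀ η ∈ W, ∃ ω, IsOptPathSet q K L h σ A ω ∧ η ∈ ω ∧
      energy K L h η = PhiSet q K L h σ A) ∧
  ∀ ω, IsOptPathSet q K L h σ A ω → ∃ η ∈ W, η ∈ ω

/-- A minimal gate: a gate no proper subset of which is a gate. -/
def IsMinimalGate (q K L : ℕ) [NeZero K] [NeZero L] (h : ℝ) (σ : Cfg K L)
    (A W : Set (Cfg K L)) : Prop :=
  IsGate q K L h σ A W ∧ ∀ W', W' ⊂ W → ¬ IsGate q K L h σ A W'

/-- A `p × r` rectangle (p rows, r columns) on the torus with base point `(x,y)`. -/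
def rect (K L : ℕ) (x : ZMod K) (y : ZMod L) (p r : ℕ) : Set (Vtx K L) :=
  {v | ∃ i j : ℕ, i < p ∧ j < r ∧ v = (x + (i : ZMod K), y + (j : ZMod L))}

/-- `A` is an `a × b` rectangle on the torus (in either orientation). -/
def IsRect (K L : ℕ) (A : Set (Vtx K L)) (a b : ℕ) : Prop :=
  ∃ x y, A = rect K L x y a b ∨ A = rect K L x y b a

/-- `R̄_{a,b}(r,s)`: configurations equal to `r` everywhere except on an
`a × b` rectangle where they equal `s`. -/
def Rbar (K L a b r s : ℕ) : Set (Cfg K L) :=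
  {σ | ∃ A, IsRect K L A a b ∧ (∀ v ∈ A, σ v = s) ∧ ∀ v ∉ A, σ v = r}

/-- A horizontal bar of `l` cells in row `x`, starting at column `y`. -/
def hbar (K L : ℕ) (x : ZMod K) (y : ZMod L) (l : ℕ) : Set (Vtx K L) :=
  {v | ∃ j : ℕ, j < l ∧ v = (x, y + (j : ZMod L))}

/-- A vertical bar of `l` cells in column `y`, starting at row `x`. -/
def vbar (K L : ℕ) (x : ZMod K) (y : ZMod L) (l : ℕ) : Set (Vtx K L) :=
  {v | ∃ j : ℕ, j < l ∧ v = (x + (j : ZMod K), y)}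

/-- `A` is an `a × b` rectangle together with a `1 × l` bar adjacent to one of the
sides of length `b` (in either orientation of the rectangle). -/
def IsRectWithBar (K L : ℕ) (A : Set (Vtx K L)) (a b l : ℕ) : Prop :=
  ∃ (x : ZMod K) (y : ZMod L) (j0 : ℕ), j0 + l ≤ b ∧
    (A = rect K L x y a b ∪ hbar K L (x + (a : ZMod K)) (y + (j0 : ZMod L)) l ∨
     A = rect K L x y a b ∪ hbar K L (x - 1) (y + (j0 : ZMod L)) l ∨
     A = rect K L x y b a ∪ vbar K L (x + (j0 : ZMod K)) (y + (a : ZMod L)) l ∨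
     A = rect K L x y b a ∪ vbar K L (x + (j0 : ZMod K)) (y - 1) l)

/-- `B̄^l_{a,b}(r,s)`: configurations equal to `r` everywhere except on an
`a × b` rectangle with a `1 × l` bar attached to a side of length `b`,
where they equal `s`. -/
def Bbar (K L a b l r s : ℕ) : Set (Cfg K L) :=
  {σ | ∃ A, IsRectWithBar K L A a b l ∧ (∀ v ∈ A, σ v = s) ∧ ∀ v ∉ A, σ v = r}

/-- Connectedness of a set of vertices under torus adjacency. -/
def ConnSet (K L : ℕ) (C : Set (Vtx K L)) : Prop :=
  ∀ u ∈ C, ∀ w ∈ C, ∃ γ : List (Vtx K L), γ.head? = some u ∧ γ.getLast? = some w ∧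
    γ.Chain' (Adj K L) ∧ ∀ v ∈ γ, v ∈ C

/-- The perimeter of a set of vertices: the number of torus edges joining it
to its complement. -/
noncomputable def perimeter (K L : ℕ) (C : Set (Vtx K L)) : ℕ :=
  Set.ncard {p : Vtx K L × Vtx K L | Adj K L p.1 p.2 ∧ p.1 ∈ C ∧ p.2 ∉ C}

/-- The external boundary `∂C` of a set of configurations. -/
def extBoundary (q K L : ℕ) (C : Set (Cfg K L)) : Set (Cfg K L) :=
  {η | IsConf q K L η ∧ η ∉ C ∧ ∃ σ ∈ C, Communicates K L σ η}

/-- Connectedness of a set of configurations under single-spin updates. -/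
def ConnCfg (q K L : ℕ) (C : Set (Cfg K L)) : Prop :=
  ∀ σ ∈ C, ∀ η ∈ C, ∃ ω, IsPath q K L σ η ω ∧ ∀ ξ ∈ ω, ξ ∈ C

/-- A cycle: a nonempty set of configurations which is either a singleton, or is
connected with `max H` inside strictly below `min H` on the external boundary. -/
def IsCycle (q K L : ℕ) [NeZero K] [NeZero L] (h : ℝ) (C : Set (Cfg K L)) : Prop :=
  C.Nonempty ∧ (∀ σ ∈ C, IsConf q K L σ) ∧
    ((∃ σ, C = {σ}) ∨
      (ConnCfg q K L C ∧
        sSup (energy K L h '' C) < sInf (energy K L h '' extBoundary q K L C)))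

open Classical in
/-- The depth of a cycle: `0` for singletons, otherwise
`min H on ∂C − min H on C`. -/
noncomputable def depth (q K L : ℕ) [NeZero K] [NeZero L] (h : ℝ)
    (C : Set (Cfg K L)) : ℝ :=
  if ∃ σ, C = {σ} then 0
  else sInf (energy K L h '' extBoundary q K L C) - sInf (energy K L h '' C)

/-- `D^m`: configurations with exactly `KL − (ℓ*(ℓ*−1)+1)` spins equal to `m`. -/
def Dm (q K L : ℕ) (h : ℝ) (m : ℕ) : Set (Cfg K L) :=
  {σ | IsConf q K L σ ∧
    Set.ncard {v | σ v = m} = K * L - (ellStar h * (ellStar h - 1) + 1)}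

/-- `F(D^m)`: the minimizers of the energy on `D^m`. -/
def FDm (q K L : ℕ) [NeZero K] [NeZero L] (h : ℝ) (m : ℕ) : Set (Cfg K L) :=
  {σ | σ ∈ Dm q K L h m ∧ ∀ η ∈ Dm q K L h m, energy K L h σ ≤ energy K L h η}

/-- `n_s(v)`: the number of nearest neighbours of `v` whose spin in `σ` is `s`. -/
noncomputable def nnbr (K L : ℕ) (σ : Cfg K L) (v : Vtx K L) (s : ℕ) : ℕ :=
  Set.ncard {w | Adj K L v w ∧ σ w = s}

/-!
Up to a translation, the point reflection `v ↦ c - v` and the transposition of the torus, all of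
which preserve the energy, the droplet is the rectangle `[0, ℓ* - 2] × [0, ℓ* - 1]` with its bar in
row `ℓ* - 1`. Starting from `𝐦`, turn the sites into `1` one at a time: first the strip of the
first `ℓ*` columns row by row (the bar row outwards from the bar), then the remaining columns one
by one, so that the droplet consists of the first `ℓ*(ℓ* - 1) + 2` sites. Flipping a site with `k`
neighbours already equal to `1` changes the energy by `4 - 2k - h`, and every site after the first
has at least two such neighbours, except the first site of a line and the sites of the first row,
which have one. After `t` flips the energy thus exceeds `H(𝐦)` by at most `2 + 2N - ht`, where `N`
counts the line starts; as every line has at least `ℓ* > 2 / h` sites, this stays below `Γ` from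
the droplet on.
-/

open scoped Finset

section Sums
variable {G G' : Type*} [Fintype G] [Fintype G']

noncomputable def oneCount (σ : G → ℕ) : ℝ :=
  ∑ v, if σ v = 1 then 1 else 0

theorem oneCount_comp_equiv (e : G ≃ G') (σ : G' → ℕ) :
    oneCount (fun v => σ (e v)) = oneCount σ :=
  e.sum_comp (fun v => if σ v = 1 then (1 : ℝ) else 0)

theorem oneCount_update [DecidableEq G] (σ : G → ℕ) (v : G) (s : ℕ) :
    oneCount (Function.update σ v s) = oneCount σ
      + ((if s = 1 then 1 else 0) - (if σ v = 1 then 1 else 0)) := by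
  rw [← sub_eq_iff_eq_add', oneCount, oneCount, ← Finset.sum_sub_distrib,
    Fintype.sum_eq_single v]
  · simp
  · intro w hw
    simp [Function.update_of_ne hw]

variable [AddCommGroup G] [AddCommGroup G']

noncomputable def bondSum (σ : G → ℕ) (d : G) : ℝ :=
  ∑ v, if σ v = σ (v + d) then 1 else 0

theorem bondSum_comp_add_right (σ : G → ℕ) (c d : G) :
    bondSum (fun v => σ (v + c)) d = bondSum σ d := by
  unfold bondSum
  simp_rw [add_right_comm _ d c]
  exact Equiv.sum_comp (Equiv.addRight c) (fun v => if σ v = σ (v + d) then (1 : ℝ) else 0)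

theorem bondSum_comp_addEquiv (e : G ≃+ G') (σ : G' → ℕ) (d : G) :
    bondSum (fun v => σ (e v)) d = bondSum σ (e d) := by
  unfold bondSum
  simp_rw [map_add]
  exact e.toEquiv.sum_comp (fun v => if σ v = σ (v + e d) then (1 : ℝ) else 0)

theorem bondSum_neg (σ : G → ℕ) (d : G) : bondSum σ (-d) = bondSum σ d := by
  unfold bondSum
  rw [← Equiv.sum_comp (Equiv.addRight d)]
  simp [eq_comm]

theorem bondSum_update [DecidableEq G] {d : G} (hd : d ≠ 0) (σ : G → ℕ) (v : G) (s : ℕ) :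
    bondSum (Function.update σ v s) d = bondSum σ d
      + ((if σ (v + d) = s then 1 else 0) - (if σ (v + d) = σ v then 1 else 0))
      + ((if σ (v - d) = s then 1 else 0) - (if σ (v - d) = σ v then 1 else 0)) := by
  have hvd : v + d ≠ v := by simpa using hd
  have hv : v - d ≠ v := by simpa [sub_eq_self] using hd
  rw [add_assoc, ← sub_eq_iff_eq_add', bondSum, bondSum, ← Finset.sum_sub_distrib,
    Fintype.sum_eq_add v (v - d) hv.symm]
  · simp [Function.update_of_ne hvd, Function.update_of_ne hv, eq_comm]
  · rintro w ⟨hwv, hwd⟩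
    have hwd' : w + d ≠ v := fun h => hwd (eq_sub_of_add_eq h)
    simp [Function.update_of_ne hwv, Function.update_of_ne hwd']

end Sums

section Symmetry
variable {K L : ℕ} [NeZero K] [NeZero L]

theorem energy_eq (h : ℝ) (σ : Cfg K L) :
    energy K L h σ = -(bondSum σ (1, 0) + bondSum σ (0, 1)) - h * oneCount σ := by
  have h10 (v : Vtx K L) : v + (1, 0) = (v.1 + 1, v.2) := Prod.ext rfl (add_zero _)
  have h01 (v : Vtx K L) : v + (0, 1) = (v.1, v.2 + 1) := Prod.ext (add_zero _) rfl
  simp only [energy, bondSum, oneCount, ← Finset.sum_add_distrib, h10, h01]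

theorem energy_comp_add_right (h : ℝ) (σ : Cfg K L) (c : Vtx K L) :
    energy K L h (fun v => σ (v + c)) = energy K L h σ := by
  rw [energy_eq, energy_eq, bondSum_comp_add_right, bondSum_comp_add_right,
    ← oneCount_comp_equiv (Equiv.addRight c) σ]
  rfl

theorem energy_comp_neg (h : ℝ) (σ : Cfg K L) :
    energy K L h (fun v => σ (-v)) = energy K L h σ := by
  have hbond (d : Vtx K L) : bondSum (fun v => σ (-v)) d = bondSum σ d :=
    (bondSum_comp_addEquiv (AddEquiv.neg _) σ d).trans (bondSum_neg σ d)
  rw [energy_eq, energy_eq, hbond, hbond, ← oneCount_comp_equiv (Equiv.neg _) σ]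
  rfl

theorem energy_comp_sub_left (h : ℝ) (σ : Cfg K L) (c : Vtx K L) :
    energy K L h (fun v => σ (c - v)) = energy K L h σ := by
  simp_rw [sub_eq_neg_add c]
  rw [energy_comp_neg (σ := fun v => σ (v + c)), energy_comp_add_right]

theorem energy_comp_swap (h : ℝ) (σ : Cfg K L) :
    energy L K h (fun w => σ w.swap) = energy K L h σ := by
  have hbond (d : Vtx L K) : bondSum (fun w => σ w.swap) d = bondSum σ d.swap :=
    bondSum_comp_addEquiv AddEquiv.prodComm σ d
  rw [energy_eq, energy_eq, hbond, hbond, ← oneCount_comp_equiv (Equiv.prodComm _ _) σ]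
  simp only [Prod.swap_prod_mk, add_comm]
  rfl

end Symmetry

def ReachesOneBelow (q K L : ℕ) [NeZero K] [NeZero L] (h c : ℝ) (σ : Cfg K L) : Prop :=
  ∃ ω, IsPath q K L σ (const K L 1) ω ∧ height K L h ω < c

section Paths
variable {q K L K' L' : ℕ}

theorem communicates_update {σ : Cfg K L} {v : Vtx K L} {s : ℕ}
    (hs : σ v ≠ s) : Communicates K L σ (Function.update σ v s) :=
  ⟨v, by simpa using hs, fun w hw => (Function.update_of_ne hw _ _).symm⟩

theorem Communicates.comp (e : Vtx K' L' ≃ Vtx K L) {σ η : Cfg K L}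
    (hση : Communicates K L σ η) : Communicates K' L' (σ ∘ e) (η ∘ e) := by
  obtain ⟨v, hv, hrest⟩ := hση
  exact ⟨e.symm v, by simpa using hv, fun w hw => hrest _ fun h => hw (e.eq_symm_apply.mpr h)⟩

theorem IsPath.map_comp (e : Vtx K' L' ≃ Vtx K L) {σ τ : Cfg K L} {ω : List (Cfg K L)}
    (hω : IsPath q K L σ τ ω) : IsPath q K' L' (σ ∘ e) (τ ∘ e) (ω.map (· ∘ e)) := by
  obtain ⟨hhead, hlast, hchain, hconf⟩ := hω
  refine ⟨by simp [hhead], by simp [hlast], ?_, ?_⟩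
  · exact List.isChain_map_of_isChain _ (fun _ _ h => Communicates.comp e h) hchain
  · simp only [List.mem_map]
    rintro _ ⟨η, hη, rfl⟩ v
    exact hconf η hη (e v)

theorem isPath_map_range {f : ℕ → Cfg K L} {n : ℕ}
    (hstep : ∀ k < n, Communicates K L (f k) (f (k + 1))) (hconf : ∀ k ≤ n, IsConf q K L (f k)) :
    IsPath q K L (f 0) (f n) ((List.range (n + 1)).map f) := by
  refine ⟨by simp [List.range_succ_eq_map], by simp [List.getLast?_range], ?_, ?_⟩
  · exact (List.isChain_map f).mpr ((List.isChain_range_succ _ n).mpr hstep)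
  · simp only [List.mem_map, List.mem_range]
    rintro _ ⟨k, hk, rfl⟩
    exact hconf k (Nat.lt_succ_iff.mp hk)

variable [NeZero K] [NeZero L] [NeZero K'] [NeZero L']

theorem height_map_comp {h : ℝ} (e : Vtx K' L' ≃ Vtx K L)
    (he : ∀ σ, energy K' L' h (σ ∘ e) = energy K L h σ) (ω : List (Cfg K L)) :
    height K' L' h (ω.map (· ∘ e)) = height K L h ω := by
  unfold height
  congr 1
  ext r
  simp [he]

theorem ReachesOneBelow.of_comp {h c : ℝ} (e : Vtx K' L' ≃ Vtx K L)
    (he : ∀ σ, energy K' L' h (σ ∘ e) = energy K L h σ) {σ : Cfg K L}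
    (H : ReachesOneBelow q K' L' h c (σ ∘ e)) : ReachesOneBelow q K L h c σ := by
  obtain ⟨ω, hω, hc⟩ := H
  have he' : ∀ η, energy K L h (η ∘ e.symm) = energy K' L' h η := fun η => by
    rw [← he]; simp [Function.comp_assoc]
  refine ⟨ω.map (· ∘ e.symm), ?_, by rwa [height_map_comp e.symm he']⟩
  have hpath : IsPath q K L ((σ ∘ e) ∘ e.symm) (const K L 1) (ω.map (· ∘ e.symm)) :=
    hω.map_comp e.symm
  rwa [Function.comp_assoc, e.self_comp_symm, Function.comp_id] at hpath

theorem height_lt_of_forall_mem {h c : ℝ} {ω : List (Cfg K L)} (hω : ω ≠ [])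
    (hc : ∀ η ∈ ω, energy K L h η < c) : height K L h ω < c := by
  obtain ⟨η, hη⟩ := List.exists_mem_of_ne_nil ω hω
  rw [height, Set.Finite.csSup_lt_iff ((List.finite_toSet ω).image _) ⟨_, η, hη, rfl⟩]
  rintro _ ⟨η, hη, rfl⟩
  exact hc η hη

end Paths

section Growth
variable {K L : ℕ} (ord : Vtx K L → ℕ) (m : ℕ)

def growthCfg (t : ℕ) : Cfg K L := fun v => if ord v < t then 1 else m

noncomputable def earlierCount (t : ℕ) (v : Vtx K L) : ℝ :=
  (if ord (v + (1, 0)) < t then 1 else 0) + (if ord (v - (1, 0)) < t then 1 else 0)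
    + (if ord (v + (0, 1)) < t then 1 else 0) + (if ord (v - (0, 1)) < t then 1 else 0)

variable {ord m}

theorem growthCfg_succ (hord : Function.Injective ord) {t : ℕ} {v : Vtx K L} (hv : ord v = t) :
    growthCfg ord m (t + 1) = Function.update (growthCfg ord m t) v 1 := by
  funext w
  rcases eq_or_ne w v with rfl | hw
  · simp [growthCfg, hv]
  · have : ord w ≠ t := hv ▸ hord.ne hw
    have hlt : ord w < t + 1 ↔ ord w < t := by omega
    simp only [growthCfg, Function.update_of_ne hw, hlt]

theorem energy_growthCfg_succ [NeZero K] [NeZero L] (hK : 1 < K) (hL : 1 < L) (hm : m ≠ 1) (h : ℝ)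
    (hord : Function.Injective ord) {t : ℕ} {v : Vtx K L} (hv : ord v = t) :
    energy K L h (growthCfg ord m (t + 1))
      = energy K L h (growthCfg ord m t) + 4 - h - 2 * earlierCount ord t v := by
  have : Fact (1 < K) := ⟨hK⟩
  have : Fact (1 < L) := ⟨hL⟩
  have h10 : ((1, 0) : Vtx K L) ≠ 0 := by simp [Prod.ext_iff]
  have h01 : ((0, 1) : Vtx K L) ≠ 0 := by simp [Prod.ext_iff]
  have hfill (u : Vtx K L) : growthCfg ord m t u = 1 ↔ ord u < t := by
    unfold growthCfg; split_ifs <;> simp [*]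
  have hempty (u : Vtx K L) : growthCfg ord m t u = m ↔ ¬ ord u < t := by
    unfold growthCfg; split_ifs <;> simp [*, Ne.symm hm]
  have hnot (P : Prop) [Decidable P] : (if ¬P then (1 : ℝ) else 0) = 1 - if P then 1 else 0 := by
    split_ifs <;> simp
  rw [growthCfg_succ hord hv, energy_eq, energy_eq, bondSum_update h10, bondSum_update h01,
    oneCount_update, (hempty v).mpr (by omega)]
  simp only [hfill, hempty, hnot, earlierCount, if_true, if_neg hm]
  ring

theorem earlierCount_nonneg (t : ℕ) (v : Vtx K L) : 0 ≤ earlierCount ord t v := by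
  unfold earlierCount
  positivity

theorem one_le_earlierCount {t : ℕ} {v : Vtx K L}
    (h : ord (v - (1, 0)) < t ∨ ord (v + (0, 1)) < t ∨ ord (v - (0, 1)) < t) :
    1 ≤ earlierCount ord t v := by
  unfold earlierCount
  rcases h with h | h | h <;> simp only [h, if_true] <;> split_ifs <;> norm_num

theorem two_le_earlierCount {t : ℕ} {v : Vtx K L} (hvert : ord (v - (1, 0)) < t)
    (hhor : ord (v + (0, 1)) < t ∨ ord (v - (0, 1)) < t) : 2 ≤ earlierCount ord t v := by
  unfold earlierCount
  rcases hhor with h | h <;> simp only [hvert, h, if_true] <;> split_ifs <;> norm_num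

theorem growthCfg_zero : growthCfg ord m 0 = const K L m := rfl

/-- `P` marks the steps at which only one earlier neighbour is guaranteed; the first step, with
none, costs `4 - h`, which the constant `2` and `P 0` account for. -/
theorem energy_growthCfg_le [NeZero K] [NeZero L] (hK : 1 < K) (hL : 1 < L) (hm : m ≠ 1)
    (h : ℝ) (hord : Function.Injective ord) {N : ℕ} (hsurj : ∀ t < N, ∃ v, ord v = t)
    (P : ℕ → Prop) [DecidablePred P] (hP : P 0)
    (hcount : ∀ v, 1 ≤ ord v → 2 - (if P (ord v) then 1 else 0) ≤ earlierCount ord (ord v) v)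
    {t : ℕ} (ht : 1 ≤ t) (htN : t ≤ N) :
    energy K L h (growthCfg ord m t)
      ≤ energy K L h (const K L m) + 2 + 2 * #((Finset.range t).filter P) - h * t := by
  induction t, ht using Nat.le_induction with
  | base =>
    obtain ⟨v, hv⟩ := hsurj 0 (by omega)
    rw [energy_growthCfg_succ hK hL hm h hord hv, growthCfg_zero]
    have := earlierCount_nonneg (ord := ord) 0 v
    simp only [Finset.range_one, Finset.filter_singleton, hP, if_true, Finset.card_singleton,
      Nat.cast_one]
    linarith
  | succ t ht ih =>
    obtain ⟨v, rfl⟩ := hsurj t (by omega)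
    have hcard : #((Finset.range (ord v + 1)).filter P)
        = #((Finset.range (ord v)).filter P) + if P (ord v) then 1 else 0 := by
      rw [Finset.range_add_one, Finset.filter_insert]
      split_ifs <;> simp
    rw [energy_growthCfg_succ hK hL hm h hord rfl, hcard]
    have := hcount v ht
    have := ih (by omega)
    split_ifs at * <;> push_cast <;> linarith

end Growth

section ZModVal
variable {n : ℕ} [NeZero n]

theorem _root_.ZMod.val_sub_one_of_one_le {u : ZMod n} (hu : 1 ≤ u.val) :
    (u - 1).val = u.val - 1 := by
  have h1 : (1 : ZMod n).val = 1 := by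
    rw [ZMod.val_one_eq_one_mod, Nat.mod_eq_of_lt (by have := u.val_lt; omega)]
  rw [ZMod.val_sub (h1 ▸ hu), h1]

omit [NeZero n] in
theorem _root_.ZMod.val_add_one_of_lt {u : ZMod n} (hu : u.val + 1 < n) :
    (u + 1).val = u.val + 1 := by
  have h1 : (1 : ZMod n).val = 1 := by
    rw [ZMod.val_one_eq_one_mod, Nat.mod_eq_of_lt (by omega)]
  rw [ZMod.val_add_of_lt (by rwa [h1]), h1]

theorem _root_.ZMod.exists_natCast_eq_iff_val_lt {p : ℕ} (hp : p ≤ n) (u : ZMod n) :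
    (∃ i < p, u = (i : ZMod n)) ↔ u.val < p := by
  constructor
  · rintro ⟨i, hi, rfl⟩
    rwa [ZMod.val_cast_of_lt (by omega)]
  · exact fun hu => ⟨u.val, hu, (ZMod.natCast_zmod_val u).symm⟩

theorem _root_.ZMod.val_sub_natCast_lt_iff {j l : ℕ} (hjl : j + l ≤ n) (u : ZMod n) :
    (u - j).val < l ↔ j ≤ u.val ∧ u.val < j + l := by
  rcases Nat.eq_zero_or_pos l with rfl | hl
  · simp
  have hj : (j : ZMod n).val = j := ZMod.val_cast_of_lt (by omega)
  by_cases hju : j ≤ u.val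
  · rw [ZMod.val_sub (by rwa [hj]), hj]
    omega
  · refine iff_of_false (fun hlt => hju ?_) (by omega)
    have hval : (u - j + j).val = (u - j).val + (j : ZMod n).val :=
      ZMod.val_add_of_lt (by omega)
    rw [sub_add_cancel] at hval
    omega

theorem _root_.ZMod.val_natCast_pred_sub_lt_iff {p l : ℕ} (hlp : l ≤ p) (hpn : p ≤ n)
    (u : ZMod n) : (((p - 1 : ℕ) : ZMod n) - u).val < l ↔ p - l ≤ u.val ∧ u.val < p := by
  have hp : ((p - 1 : ℕ) : ZMod n).val = p - 1 :=
    ZMod.val_cast_of_lt (by have := NeZero.pos n; omega)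
  have hsmall (w : ZMod n) (hw : w.val < p) : (((p - 1 : ℕ) : ZMod n) - w).val = p - 1 - w.val := by
    rw [ZMod.val_sub (by omega), hp]
  by_cases hu : u.val < p
  · rw [hsmall u hu]
    omega
  · refine iff_of_false (fun hlt => hu ?_) (by omega)
    have := hsmall _ (by omega : (((p - 1 : ℕ) : ZMod n) - u).val < p)
    rw [sub_sub_cancel] at this
    omega

theorem _root_.ZMod.eq_natCast_iff_val_eq {a : ℕ} (ha : a < n) (u : ZMod n) :
    u = a ↔ u.val = a := by
  constructor
  · rintro rfl
    exact ZMod.val_cast_of_lt ha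
  · intro hu
    rw [← hu, ZMod.natCast_zmod_val]

end ZModVal

theorem _root_.Nat.eq_of_mul_add_eq {b i i' r r' : ℕ} (hr : r < b) (hr' : r' < b)
    (h : i * b + r = i' * b + r') : i = i' ∧ r = r' := by
  have hb : 0 < b := by omega
  have h1 := (Nat.div_mod_unique hb).mpr ⟨(by ring : r + b * i = i * b + r), hr⟩
  have h2 := (Nat.div_mod_unique hb).mpr ⟨(by rw [h]; ring : r' + b * i' = i * b + r), hr'⟩
  exact ⟨h1.1.symm.trans h2.1, h1.2.symm.trans h2.2⟩

section StripOrder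
variable {K L : ℕ} [NeZero K] (a b j0 : ℕ)

/-- The rank of column `j` in the filling of row `i`: row `a`, the row of the bar, is filled
from column `j0` rightwards and then from column `j0 - 1` leftwards. -/
def rowPos (i j : ℕ) : ℕ := if i ≠ a then j else if j0 ≤ j then j - j0 else b - 1 - j

/-- Fill the strip of the first `b` columns row by row, then the remaining columns one by one. -/
def stripOrder (v : Vtx K L) : ℕ :=
  if v.2.val < b then v.1.val * b + rowPos a b j0 v.1.val v.2.val
  else K * b + (v.2.val - b) * K + v.1.val

/-- The steps of `stripOrder` that start a new line: every step in row `0`, the first step of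
every other row, and the first step of every column outside the strip. -/
def IsLineStart (K b t : ℕ) : Prop :=
  t < b ∨ (t < K * b ∧ b ∣ t) ∨ (K * b ≤ t ∧ K ∣ t - K * b)

instance (K b : ℕ) : DecidablePred (IsLineStart K b) := fun _ => by
  unfold IsLineStart; infer_instance

variable {a b j0}

theorem rowPos_lt {i j : ℕ} (hj : j < b) : rowPos a b j0 i j < b := by
  unfold rowPos; split_ifs <;> omega

theorem rowPos_injOn {i j j' : ℕ} (hj : j < b) (hj' : j' < b)
    (h : rowPos a b j0 i j = rowPos a b j0 i j') : j = j' := by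
  unfold rowPos at h; split_ifs at h <;> omega

theorem stripOrder_lt_mul_iff (v : Vtx K L) :
    stripOrder a b j0 v < K * b ↔ v.2.val < b := by
  have hi := v.1.val_lt
  unfold stripOrder
  split_ifs with hj
  · have := rowPos_lt (a := a) (j0 := j0) (i := v.1.val) hj
    have : v.1.val * b + b ≤ K * b := by nlinarith
    simp only [hj, iff_true]
    omega
  · simp only [hj, iff_false, not_lt]
    omega

theorem stripOrder_lt [NeZero L] (hbL : b ≤ L) (v : Vtx K L) : stripOrder a b j0 v < K * L := by
  by_cases hjb : v.2.val < b
  · calc stripOrder a b j0 v < K * b := (stripOrder_lt_mul_iff v).mpr hjb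
      _ ≤ K * L := Nat.mul_le_mul_left K hbL
  · have hcol : K * b + (v.2.val - b) * K + K = K * (v.2.val + 1) := by
      zify [le_of_not_gt hjb]
      ring
    have := Nat.mul_le_mul_left K (show v.2.val + 1 ≤ L from v.2.val_lt)
    have := v.1.val_lt
    simp only [stripOrder, hjb, if_false]
    omega

theorem stripOrder_injective [NeZero L] :
    Function.Injective (stripOrder (K := K) (L := L) a b j0) := by
  intro v w hvw
  have hK := NeZero.pos K
  have hvi := v.1.val_lt
  have hwi := w.1.val_lt
  have hbranch : v.2.val < b ↔ w.2.val < b := by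
    rw [← stripOrder_lt_mul_iff, ← stripOrder_lt_mul_iff (a := a) (j0 := j0), hvw]
  have hcoords : v.1.val = w.1.val ∧ v.2.val = w.2.val := by
    unfold stripOrder at hvw
    by_cases hj : v.2.val < b
    · have hj' := hbranch.mp hj
      rw [if_pos hj, if_pos hj'] at hvw
      obtain ⟨hi, hpos⟩ := Nat.eq_of_mul_add_eq (rowPos_lt hj) (rowPos_lt hj') hvw
      exact ⟨hi, rowPos_injOn hj hj' (hi ▸ hpos)⟩
    · have hj' : ¬ w.2.val < b := fun h => hj (hbranch.mpr h)
      rw [if_neg hj, if_neg hj'] at hvw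
      obtain ⟨hcol, hi⟩ := Nat.eq_of_mul_add_eq (i := v.2.val - b) (i' := w.2.val - b) hvi hwi
        (by omega)
      exact ⟨hi, by omega⟩
  exact Prod.ext (ZMod.val_injective _ hcoords.1) (ZMod.val_injective _ hcoords.2)

theorem stripOrder_lt_iff (haK : a < K) (hj0 : j0 + 2 ≤ b) (v : Vtx K L) :
    stripOrder a b j0 v < a * b + 2 ↔
      (v.1.val < a ∧ v.2.val < b) ∨ (v.1.val = a ∧ j0 ≤ v.2.val ∧ v.2.val < j0 + 2) := by
  have hab : a * b + b ≤ K * b := by nlinarith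
  by_cases hj : v.2.val < b
  · have hpos := rowPos_lt (a := a) (j0 := j0) (i := v.1.val) hj
    rw [stripOrder, if_pos hj]
    simp only [hj, and_true]
    rcases lt_trichotomy v.1.val a with hi | hi | hi
    · have : v.1.val * b + b ≤ a * b := by nlinarith
      omega
    · simp only [hi, rowPos, ne_eq, not_true_eq_false, if_false, lt_irrefl, false_or, true_and]
      split_ifs <;> omega
    · have : a * b + b ≤ v.1.val * b := by nlinarith
      omega
  · have := (stripOrder_lt_mul_iff (a := a) (j0 := j0) v).not.mpr hj
    omega

theorem stripOrder_sub_one_zero_lt {v : Vtx K L} (hi : 1 ≤ v.1.val) :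
    stripOrder a b j0 (v - (1, 0)) < stripOrder a b j0 v := by
  have hfst : (v - (1, 0)).1.val = v.1.val - 1 := ZMod.val_sub_one_of_one_le hi
  have hsnd : (v - (1, 0)).2 = v.2 := sub_zero v.2
  have hrow : (v.1.val - 1) * b + b = v.1.val * b := by
    rw [← Nat.succ_mul, Nat.succ_eq_add_one, Nat.sub_add_cancel hi]
  unfold stripOrder
  rw [hfst, hsnd]
  split_ifs with hj
  · have := rowPos_lt (a := a) (j0 := j0) (i := v.1.val - 1) hj
    omega
  · omega

theorem isLineStart_stripOrder {v : Vtx K L}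
    (hv : v.1.val = 0 ∨ (v.2.val < b ∧ rowPos a b j0 v.1.val v.2.val = 0)) :
    IsLineStart K b (stripOrder a b j0 v) := by
  have hi := v.1.val_lt
  unfold IsLineStart stripOrder
  split_ifs with hj
  · rcases hv with hv | ⟨-, hv⟩
    · left
      rw [hv, zero_mul, zero_add]
      exact rowPos_lt hj
    · right; left
      rw [hv, add_zero]
      exact ⟨by nlinarith, dvd_mul_left _ _⟩
  · have hv : v.1.val = 0 := by tauto
    right; right
    rw [hv, add_zero, Nat.add_sub_cancel_left]
    exact ⟨by omega, dvd_mul_left _ _⟩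

end StripOrder

section StripOrderSteps
variable {K L : ℕ} [NeZero K] [NeZero L] {a b j0 : ℕ}

theorem exists_stripOrder_eq (hbL : b ≤ L) {t : ℕ} (ht : t < K * L) :
    ∃ v : Vtx K L, stripOrder a b j0 v = t := by
  let f : Vtx K L → Fin (K * L) := fun v => ⟨stripOrder a b j0 v, stripOrder_lt hbL v⟩
  have hf : Function.Bijective f := (Fintype.bijective_iff_injective_and_card f).mpr
    ⟨fun v w hvw => stripOrder_injective (Fin.val_eq_of_eq hvw), by simp [ZMod.card]⟩
  obtain ⟨v, hv⟩ := hf.2 ⟨t, ht⟩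
  exact ⟨v, congrArg Fin.val hv⟩

theorem stripOrder_horizontal_lt (hj0 : j0 < b) (hbL : b ≤ L) (v : Vtx K L)
    (hpos : v.2.val < b → 1 ≤ rowPos a b j0 v.1.val v.2.val) :
    stripOrder a b j0 (v + (0, 1)) < stripOrder a b j0 v ∨
      stripOrder a b j0 (v - (0, 1)) < stripOrder a b j0 v := by
  have hL := v.2.val_lt
  have hright : (v + (0, 1)).1 = v.1 := add_zero v.1
  have hleft : (v - (0, 1)).1 = v.1 := sub_zero v.1
  by_cases hj : v.2.val < b
  · specialize hpos hj
    by_cases hbar : v.1.val = a ∧ v.2.val < j0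
    · left
      have hsnd : (v + (0, 1)).2.val = v.2.val + 1 := ZMod.val_add_one_of_lt (by omega)
      simp only [stripOrder, hright, hsnd, rowPos] at hpos ⊢
      split_ifs at hpos ⊢ <;> omega
    · right
      have hj1 : 1 ≤ v.2.val := by unfold rowPos at hpos; split_ifs at hpos <;> omega
      have hsnd : (v - (0, 1)).2.val = v.2.val - 1 := ZMod.val_sub_one_of_one_le hj1
      simp only [stripOrder, hleft, hsnd, rowPos] at hpos ⊢
      split_ifs at hpos ⊢ <;> omega
  · right
    have hsnd : (v - (0, 1)).2.val = v.2.val - 1 := ZMod.val_sub_one_of_one_le (by omega)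
    have hv : K * b ≤ stripOrder a b j0 v := by
      simpa using (stripOrder_lt_mul_iff (a := a) (j0 := j0) v).not.mpr hj
    by_cases hj1 : v.2.val - 1 < b
    · have := (stripOrder_lt_mul_iff (a := a) (j0 := j0) (v - (0, 1))).mpr (hsnd ▸ hj1)
      omega
    · have hcol : (v.2.val - 1 - b) * K + K = (v.2.val - b) * K := by
        rw [← Nat.succ_mul]; congr 1; omega
      unfold stripOrder
      rw [hleft, hsnd, if_neg hj, if_neg hj1]
      have := NeZero.pos K
      omega

theorem two_sub_le_earlierCount (hj0 : j0 < b) (hbL : b ≤ L) {v : Vtx K L}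
    (hv : 1 ≤ stripOrder a b j0 v) :
    2 - (if IsLineStart K b (stripOrder a b j0 v) then 1 else 0)
      ≤ earlierCount (stripOrder a b j0) (stripOrder a b j0 v) v := by
  by_cases hstart : IsLineStart K b (stripOrder a b j0 v)
  · have hearlier : stripOrder a b j0 (v - (1, 0)) < stripOrder a b j0 v ∨
        stripOrder a b j0 (v + (0, 1)) < stripOrder a b j0 v ∨
        stripOrder a b j0 (v - (0, 1)) < stripOrder a b j0 v := by
      by_cases hi : 1 ≤ v.1.val
      · exact Or.inl (stripOrder_sub_one_zero_lt hi)
      · refine Or.inr (stripOrder_horizontal_lt hj0 hbL v fun hj => ?_)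
        have hi0 : v.1.val = 0 := by omega
        simp only [stripOrder, if_pos hj, hi0, zero_mul, zero_add] at hv ⊢
        exact hv
    rw [if_pos hstart]
    linarith [one_le_earlierCount hearlier]
  · have hi : 1 ≤ v.1.val := by
      by_contra hi
      exact hstart (isLineStart_stripOrder (Or.inl (by omega)))
    have hpos (hj : v.2.val < b) : 1 ≤ rowPos a b j0 v.1.val v.2.val := by
      by_contra hpos
      exact hstart (isLineStart_stripOrder (Or.inr ⟨hj, by omega⟩))
    have hvert := stripOrder_sub_one_zero_lt (a := a) (b := b) (j0 := j0) hi
    have hhor := stripOrder_horizontal_lt hj0 hbL v hpos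
    rw [if_neg hstart]
    linarith [two_le_earlierCount hvert hhor]

end StripOrderSteps

theorem card_mul_le_of_separated {S : Finset ℕ} {d lo hi : ℕ} (hS : ∀ u ∈ S, lo ≤ u ∧ u < hi)
    (hsep : ∀ u ∈ S, ∀ u' ∈ S, u < u' → u + d ≤ u') : #S * d ≤ hi - lo + d - 1 := by
  induction S using Finset.induction_on_max generalizing hi with
  | empty => simp
  | insert M S hlt ih =>
    have hM := hS M (Finset.mem_insert_self M S)
    rw [Finset.card_insert_of_notMem fun h => lt_irrefl M (hlt M h), add_one_mul]
    rcases S.eq_empty_or_nonempty with rfl | ⟨u, hu⟩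
    · simp only [Finset.card_empty, zero_mul]
      omega
    · have hbelow (w : ℕ) (hw : w ∈ S) : w + d ≤ M :=
        hsep w (Finset.mem_insert_of_mem hw) M (Finset.mem_insert_self M S) (hlt w hw)
      have := ih (hi := M + 1 - d)
        (fun w hw => ⟨(hS w (Finset.mem_insert_of_mem hw)).1, by have := hbelow w hw; omega⟩)
        (fun w hw w' hw' => hsep w (Finset.mem_insert_of_mem hw) w' (Finset.mem_insert_of_mem hw'))
      have := hbelow u hu
      have := (hS u (Finset.mem_insert_of_mem hu)).1
      omega

theorem IsLineStart.add_le {K b u u' : ℕ} (hbK : b ≤ K) (hbu : b ≤ u) (huu' : u < u')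
    (hu : IsLineStart K b u) (hu' : IsLineStart K b u') : u + b ≤ u' := by
  rcases hu with hu | ⟨huK, k, rfl⟩ | ⟨huK, k, hk⟩
  · omega
  · rcases hu' with hu' | ⟨-, k', rfl⟩ | ⟨hu'K, -⟩
    · omega
    · have : k < k' := Nat.lt_of_mul_lt_mul_left huu'
      nlinarith
    · have : k < K := Nat.lt_of_mul_lt_mul_left (by linarith : b * k < b * K)
      nlinarith
  · rcases hu' with hu' | ⟨hu'K, -⟩ | ⟨-, k', hk'⟩
    · omega
    · omega
    · have : k < k' := Nat.lt_of_mul_lt_mul_left (by omega : K * k < K * k')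
      have := Nat.mul_le_mul_left K (Nat.succ_le_of_lt this)
      rw [Nat.mul_succ] at this
      omega

theorem card_filter_isLineStart_mul_le {K b t : ℕ} (hbK : b ≤ K) (hbt : b ≤ t) :
    #((Finset.range t).filter (IsLineStart K b)) * b ≤ b * b + (t - 1) := by
  set S := (Finset.range t).filter (IsLineStart K b)
  have hlow : #(S.filter (· < b)) ≤ b :=
    (Finset.card_le_card fun u hu => Finset.mem_range.mpr (Finset.mem_filter.mp hu).2).trans
      (Finset.card_range b).le
  have hhigh : #(S.filter (¬ · < b)) * b ≤ t - b + b - 1 := by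
    refine card_mul_le_of_separated (fun u hu => ?_) (fun u hu u' hu' huu' => ?_)
    · simp only [S, Finset.mem_filter, Finset.mem_range] at hu
      omega
    · simp only [S, Finset.mem_filter, Finset.mem_range] at hu hu'
      exact IsLineStart.add_le hbK (by omega) huu' hu.1.2 hu'.1.2
  rw [← Finset.card_filter_add_card_filter_not (· < b), add_mul]
  exact (Nat.add_le_add (Nat.mul_le_mul_right b hlow) hhigh).trans
    (Nat.add_le_add_left (by omega) _)

theorem two_add_two_mul_sub_lt_barrier {s N t : ℕ} {h : ℝ} (hs : 2 < h * s)
    (hN : N * s ≤ s * s + (t - 1)) (ht : (s - 1) * s + 2 ≤ t) :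
    2 + 2 * (N : ℝ) - h * t < 4 * s - h * (s * (s - 1) + 1) := by
  have hs1 : 1 ≤ s := Nat.one_le_iff_ne_zero.mpr fun h0 => by norm_num [h0] at hs
  have hs0 : (0 : ℝ) < s := by exact_mod_cast hs1
  have ht' : ((s : ℝ) - 1) * s + 2 ≤ t := by
    have := (Nat.cast_le (α := ℝ)).mpr ht
    push_cast [Nat.cast_sub hs1] at this
    exact this
  have hN' : (N : ℝ) * s ≤ s * s + (t - 1) := by
    have := (Nat.cast_le (α := ℝ)).mpr hN
    push_cast [Nat.cast_sub (by omega : 1 ≤ t)] at this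
    exact this
  nlinarith [mul_pos (sub_pos.mpr hs) (by linarith : (0 : ℝ) < t - ((s - 1) * s + 1))]

section Core
variable {K L : ℕ} [NeZero K] [NeZero L]

theorem reachesOneBelow_growthCfg_stripOrder {q m s j0 : ℕ} {h : ℝ} (hs : 2 < h * s)
    (hsK : s ≤ K) (hsL : s ≤ L) (hj0 : j0 + 2 ≤ s) (hm : 2 ≤ m) (hmq : m ≤ q) :
    ReachesOneBelow q K L h (4 * s - h * (s * (s - 1) + 1) + energy K L h (const K L m))
      (growthCfg (stripOrder (s - 1) s j0) m ((s - 1) * s + 2)) := by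
  set ord : Vtx K L → ℕ := stripOrder (s - 1) s j0
  set n0 := (s - 1) * s + 2
  have hn0 : n0 ≤ K * L := by
    have := Nat.mul_le_mul_right s (by omega : 2 ≤ s)
    have := Nat.mul_le_mul hsK hsL
    simp only [n0, Nat.sub_one_mul]
    omega
  have hsurj : ∀ t < K * L, ∃ v, ord v = t := fun t ht => exists_stripOrder_eq hsL ht
  have henergy {t : ℕ} (ht : 1 ≤ t) (htN : t ≤ K * L) :=
    energy_growthCfg_le (by omega) (by omega) (by omega : m ≠ 1) h stripOrder_injective hsurj
      (IsLineStart K s) (Or.inl (by omega)) (fun v hv => two_sub_le_earlierCount (by omega) hsL hv)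
      ht htN
  have hlast : growthCfg ord m (n0 + (K * L - n0)) = const K L 1 := by
    funext v
    have := stripOrder_lt hsL v (a := s - 1) (j0 := j0)
    simp only [growthCfg, const, ord]
    rw [if_pos (by omega)]
  refine ⟨(List.range (K * L - n0 + 1)).map fun k => growthCfg ord m (n0 + k), ?_, ?_⟩
  · rw [← hlast]
    refine isPath_map_range (fun k hk => ?_) (fun k _ v => ?_)
    · obtain ⟨v, hv⟩ := hsurj (n0 + k) (by omega)
      rw [← add_assoc, growthCfg_succ stripOrder_injective hv]
      exact communicates_update (by simp only [growthCfg, hv, lt_self_iff_false, if_false]; omega)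
    · simp only [growthCfg]
      split_ifs <;> omega
  · refine height_lt_of_forall_mem (by simp) ?_
    simp only [List.mem_map, List.mem_range]
    rintro _ ⟨k, hk, rfl⟩
    have := henergy (t := n0 + k) (by omega) (by omega)
    have hsn0 : s ≤ n0 := by
      have := Nat.mul_le_mul_right s (by omega : 1 ≤ s - 1)
      simp only [n0]
      omega
    have := two_add_two_mul_sub_lt_barrier hs
      (card_filter_isLineStart_mul_le (t := n0 + k) hsK (by omega)) (by omega)
    push_cast at *
    linarith

end Core

section Droplets
variable {K L : ℕ}

theorem mem_rect_iff [NeZero K] [NeZero L] {p r : ℕ} (hp : p ≤ K) (hr : r ≤ L) (x : ZMod K)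
    (y : ZMod L) (w : Vtx K L) : w ∈ rect K L x y p r ↔ (w.1 - x).val < p ∧ (w.2 - y).val < r := by
  rw [← ZMod.exists_natCast_eq_iff_val_lt hp, ← ZMod.exists_natCast_eq_iff_val_lt hr]
  constructor
  · rintro ⟨i, j, hi, hj, rfl⟩
    exact ⟨⟨i, hi, by simp⟩, ⟨j, hj, by simp⟩⟩
  · rintro ⟨⟨i, hi, hx⟩, ⟨j, hj, hy⟩⟩
    exact ⟨i, j, hi, hj, Prod.ext (by rw [← hx]; ring) (by rw [← hy]; ring)⟩

theorem mem_hbar_iff [NeZero L] {l : ℕ} (hl : l ≤ L) (x : ZMod K) (y : ZMod L) (w : Vtx K L) :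
    w ∈ hbar K L x y l ↔ w.1 = x ∧ (w.2 - y).val < l := by
  rw [← ZMod.exists_natCast_eq_iff_val_lt hl]
  constructor
  · rintro ⟨j, hj, rfl⟩
    exact ⟨rfl, j, hj, by simp⟩
  · rintro ⟨hx, j, hj, hy⟩
    exact ⟨j, hj, Prod.ext hx (by rw [← hy]; ring)⟩

theorem swap_mem_rect_iff {p r : ℕ} (x : ZMod K) (y : ZMod L) (w : Vtx L K) :
    w.swap ∈ rect K L x y p r ↔ w ∈ rect L K y x r p := by
  constructor <;> rintro ⟨i, j, hi, hj, hw⟩ <;>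
    exact ⟨j, i, hj, hi, by simp only [Prod.ext_iff, Prod.fst_swap, Prod.snd_swap] at hw ⊢; tauto⟩

theorem swap_mem_vbar_iff {l : ℕ} (x : ZMod K) (y : ZMod L) (w : Vtx L K) :
    w.swap ∈ vbar K L x y l ↔ w ∈ hbar L K y x l := by
  constructor <;> rintro ⟨j, hj, hw⟩ <;>
    exact ⟨j, hj, by simp only [Prod.ext_iff, Prod.fst_swap, Prod.snd_swap] at hw ⊢; tauto⟩

theorem comp_eq_growthCfg {K' L' : ℕ} {A : Set (Vtx K L)} {σ : Cfg K L} {m : ℕ}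
    (hin : ∀ v ∈ A, σ v = 1) (hout : ∀ v ∉ A, σ v = m) {φ : Vtx K' L' → Vtx K L}
    {ord : Vtx K' L' → ℕ} {n : ℕ} (hA : ∀ v, φ v ∈ A ↔ ord v < n) :
    σ ∘ φ = growthCfg ord m n := by
  funext v
  by_cases hv : φ v ∈ A
  · simp [growthCfg, hin _ hv, (hA v).mp hv]
  · simp [growthCfg, hout _ hv, (hA v).not.mp hv]

end Droplets

section Cases
variable {K L : ℕ} [NeZero K] [NeZero L] {q m s j0 : ℕ} {h : ℝ}

theorem reachesOneBelow_of_bar_below (hs : 2 < h * s) (hsK : s ≤ K) (hsL : s ≤ L)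
    (hj0 : j0 + 2 ≤ s) (hm : 2 ≤ m) (hmq : m ≤ q) (x : ZMod K) (y : ZMod L) {σ : Cfg K L}
    (hin : ∀ v ∈ rect K L x y (s - 1) s ∪
      hbar K L (x + ((s - 1 : ℕ) : ZMod K)) (y + (j0 : ZMod L)) 2, σ v = 1)
    (hout : ∀ v ∉ rect K L x y (s - 1) s ∪
      hbar K L (x + ((s - 1 : ℕ) : ZMod K)) (y + (j0 : ZMod L)) 2, σ v = m) :
    ReachesOneBelow q K L h (4 * s - h * (s * (s - 1) + 1) + energy K L h (const K L m)) σ := by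
  refine ReachesOneBelow.of_comp (Equiv.addRight (x, y)) (energy_comp_add_right h · (x, y)) ?_
  rw [comp_eq_growthCfg hin hout (ord := stripOrder (s - 1) s j0) (n := (s - 1) * s + 2)]
  · exact reachesOneBelow_growthCfg_stripOrder hs hsK hsL hj0 hm hmq
  intro v
  have hsnd : v.2 + y - (y + (j0 : ZMod L)) = v.2 - j0 := by ring
  rw [stripOrder_lt_iff (by omega) hj0, Set.mem_union, mem_rect_iff (by omega) hsL,
    mem_hbar_iff (by omega)]
  simp only [Equiv.coe_addRight, Prod.fst_add, Prod.snd_add, add_sub_cancel_right,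
    add_sub_cancel_left, hsnd, add_comm _ x, add_right_inj,
    ZMod.eq_natCast_iff_val_eq (by omega : s - 1 < K),
    ZMod.val_sub_natCast_lt_iff (by omega : j0 + 2 ≤ L)]

theorem reachesOneBelow_of_bar_above (hs : 2 < h * s) (hsK : s ≤ K) (hsL : s ≤ L)
    (hj0 : j0 + 2 ≤ s) (hm : 2 ≤ m) (hmq : m ≤ q) (x : ZMod K) (y : ZMod L) {σ : Cfg K L}
    (hin : ∀ v ∈ rect K L x y (s - 1) s ∪ hbar K L (x - 1) (y + (j0 : ZMod L)) 2, σ v = 1)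
    (hout : ∀ v ∉ rect K L x y (s - 1) s ∪ hbar K L (x - 1) (y + (j0 : ZMod L)) 2, σ v = m) :
    ReachesOneBelow q K L h (4 * s - h * (s * (s - 1) + 1) + energy K L h (const K L m)) σ := by
  set c : Vtx K L := (x + ((s - 1 - 1 : ℕ) : ZMod K), y + ((s - 1 : ℕ) : ZMod L))
  refine ReachesOneBelow.of_comp (Equiv.subLeft c) (energy_comp_sub_left h · c) ?_
  rw [comp_eq_growthCfg hin hout (ord := stripOrder (s - 1) s (s - 2 - j0)) (n := (s - 1) * s + 2)]
  · exact reachesOneBelow_growthCfg_stripOrder hs hsK hsL (by omega) hm hmq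
  intro v
  have hrow : (c - v).1 - x = ((s - 1 - 1 : ℕ) : ZMod K) - v.1 := by
    simp only [c, Prod.fst_sub]; ring
  have hcol : (c - v).2 - y = ((s - 1 : ℕ) : ZMod L) - v.2 := by
    simp only [c, Prod.snd_sub]; ring
  have hbarRow : (c - v).1 = x - 1 ↔ v.1 = ((s - 1 : ℕ) : ZMod K) := by
    have hpred : ((s - 1 - 1 : ℕ) : ZMod K) + 1 = ((s - 1 : ℕ) : ZMod K) := by
      rw [← Nat.cast_succ]; congr 1; omega
    simp only [c, Prod.fst_sub, ← hpred]
    constructor <;> intro h' <;> linear_combination -h'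
  have hbarCol : (c - v).2 - (y + (j0 : ZMod L)) = ((s - j0 - 1 : ℕ) : ZMod L) - v.2 := by
    have hcast : ((s - j0 - 1 : ℕ) : ZMod L) = ((s - 1 : ℕ) : ZMod L) - j0 := by
      rw [show s - j0 - 1 = s - 1 - j0 by omega, Nat.cast_sub (by omega)]
    simp only [c, Prod.snd_sub, hcast]
    ring
  rw [stripOrder_lt_iff (by omega) (by omega), Set.mem_union, mem_rect_iff (by omega) hsL,
    mem_hbar_iff (by omega), Equiv.subLeft_apply, hrow, hcol, hbarRow, hbarCol,
    ZMod.val_natCast_pred_sub_lt_iff le_rfl (by omega), ZMod.val_natCast_pred_sub_lt_iff le_rfl hsL,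
    ZMod.val_natCast_pred_sub_lt_iff (by omega : 2 ≤ s - j0) (by omega),
    ZMod.eq_natCast_iff_val_eq (by omega)]
  omega

theorem ReachesOneBelow.of_swap {c : ℝ} {σ : Cfg K L}
    (H : ReachesOneBelow q L K h (c + energy L K h (const L K m)) (fun w => σ w.swap)) :
    ReachesOneBelow q K L h (c + energy K L h (const K L m)) σ := by
  rw [← energy_comp_swap h (const K L m)]
  exact H.of_comp (Equiv.prodComm _ _) (energy_comp_swap h)

end Cases

theorem two_lt_mul_ellStar {h : ℝ} (hh : 0 < h) (hint : ¬ ∃ n : ℤ, (2 : ℝ) / h = n) :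
    2 < h * ellStar h := by
  have hne : 2 / h ≠ ellStar h := fun heq => hint ⟨ellStar h, by rw [heq]; norm_cast⟩
  rw [← div_lt_iff₀' hh]
  exact lt_of_le_of_ne (Nat.le_ceil _) hne

theorem path_from_protocritical_to_one_general (q K L : ℕ) [NeZero K] [NeZero L] (h : ℝ)
    (hh0 : 0 < h)
    (hhint : ¬ ∃ n : ℤ, (2 : ℝ) / h = (n : ℝ))
    (hK : 3 * ellStar h ≤ K) (hKL : K ≤ L) :
    ∀ m, 2 ≤ m → m ≤ q →
      ∀ σ ∈ Bbar K L (ellStar h - 1) (ellStar h) 2 m 1,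
        ∃ ω, IsPath q K L σ (const K L 1) ω ∧
          height K L h ω < Gamma h + energy K L h (const K L m) := by
  rintro m hm hmq σ ⟨A, ⟨x, y, j0, hj0, hA⟩, hin, hout⟩
  have hs := two_lt_mul_ellStar hh0 hhint
  have hsK : ellStar h ≤ K := by omega
  have hsL : ellStar h ≤ L := by omega
  rcases hA with rfl | rfl | rfl | rfl
  · exact reachesOneBelow_of_bar_below hs hsK hsL hj0 hm hmq x y hin hout
  · exact reachesOneBelow_of_bar_above hs hsK hsL hj0 hm hmq x y hin hout
  · refine ReachesOneBelow.of_swap (reachesOneBelow_of_bar_below hs hsL hsK hj0 hm hmq y x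
      (fun w hw => hin _ ?_) (fun w hw => hout _ ?_)) <;>
      simpa only [Set.mem_union, swap_mem_rect_iff, swap_mem_vbar_iff] using hw

  · refine ReachesOneBelow.of_swap (reachesOneBelow_of_bar_above hs hsL hsK hj0 hm hmq y x
      (fun w hw => hin _ ?_) (fun w hw => hout _ ?_)) <;>
      simpa only [Set.mem_union, swap_mem_rect_iff, swap_mem_vbar_iff] using hw

/-- from any `σ ∈ B̄²_{ℓ*−1,ℓ*}(m,1)` there is a path to `𝟏` whose
maximal energy is `< 4ℓ* − h(ℓ*(ℓ*−1)+1) + H(𝐦)`. -/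
theorem path_from_protocritical_to_one (q K L : ℕ) [NeZero K] [NeZero L] (h : ℝ)
    (hq : 2 < q) (hh0 : 0 < h) (hh1 : h < 1)
    (hhint : ¬ ∃ n : ℤ, (2 : ℝ) / h = (n : ℝ))
    (hK : 3 * ellStar h ≤ K) (hKL : K ≤ L) :
    ∀ m, 2 ≤ m → m ≤ q →
      ∀ σ ∈ Bbar K L (ellStar h - 1) (ellStar h) 2 m 1,
        ∃ ω, IsPath q K L σ (const K L 1) ω ∧
          height K L h ω < Gamma h + energy K L h (const K L m) :=
  path_from_protocritical_to_one_general q K L h hh0 hhint hK hKL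

end PottsPos
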